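/- For c ≥ 1, P_FA,CSS(c) ≤ P_FA,LSS, i.e., the cooperative false-alarm probability never exceeds the local sensing false-alarm probability P_FA,LSS = 1 - Q(Δδ/σ + Q⁻¹(β)), where Δδ < 0, σ > 0, 0 ≤ ρ < 1. -/

import Mathlib

open Real

/-- The Gaussian tail function `Q(x) = (1/√(2π)) ∫_x^∞ exp(-u²/2) du`. -/
noncomputable def gaussQ (x : ℝ) : ℝ :=
  (Real.sqrt (2 * Real.pi))⁻¹ * ∫ u in Set.Ioi x, Real.exp (-u ^ 2 / 2)

open MeasureTheory Set

lemma integrable_exp_neg_sq_div_two : Integrable fun u : ℝ => exp (-u ^ 2 / 2) := by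
  convert integrable_exp_neg_mul_sq (b := 1 / 2) (by norm_num) using 3
  ring

lemma gaussQ_antitone : Antitone gaussQ := fun x y hxy => by
  unfold gaussQ
  refine mul_le_mul_of_nonneg_left ?_ (by positivity)
  exact setIntegral_mono_set integrable_exp_neg_sq_div_two.integrableOn
    (.of_forall fun u => (exp_pos _).le) (.of_forall (Ioi_subset_Ioi hxy))

lemma one_le_cooperative_gain {ρ c : ℝ} (hρ0 : -1 < ρ) (hρ1 : ρ ≤ 1) (hc : 1 ≤ c) :
    1 ≤ ((1 - ρ) * c + 2 * ρ) / (1 + ρ) := by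
  rw [one_le_div (by linarith)]
  nlinarith [mul_nonneg (sub_nonneg.2 hρ1) (sub_nonneg.2 hc)]

/-- For `c ≥ 1`, the cooperative false-alarm probability never exceeds the
local sensing false-alarm probability: `P_FA,CSS(c) ≤ P_FA,LSS`. -/
theorem Pfa_CSS_le_Pfa_LSS (Δδ σ ρ Qinvβ : ℝ)
    (hΔδ : Δδ < 0) (hσ : 0 < σ) (hρ0 : 0 ≤ ρ) (hρ1 : ρ < 1) :
    ∀ c : ℝ, 1 ≤ c →
      1 - gaussQ (Δδ / σ * Real.sqrt (((1 - ρ) * c + 2 * ρ) / (1 + ρ)) + Qinvβ)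
        ≤ 1 - gaussQ (Δδ / σ + Qinvβ) := by
  intro c hc
  have hgain : 1 ≤ √(((1 - ρ) * c + 2 * ρ) / (1 + ρ)) :=
    one_le_sqrt.mpr (one_le_cooperative_gain (by linarith) hρ1.le hc)
  have hshift : Δδ / σ * √(((1 - ρ) * c + 2 * ρ) / (1 + ρ)) ≤ Δδ / σ :=
    mul_le_of_one_le_right (div_neg_of_neg_of_pos hΔδ hσ).le hgain
  exact sub_le_sub_left (gaussQ_antitone (by linarith)) 1
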